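/- arXiv:1808.05820 — 6 statements merged into one kernel-verified Lean document; each statement's English description precedes it below -/
import Mathlib

section
/- Fix integers K > 2 and l ≥ 2 and an arbitrary real family ω = (ω_x)_{x∈𝒩}. For every vertex x ∈ 𝒱_l and every eigenvalue E of the adjacency matrix Δ_{l−1} of the finite tree Λ_{l−1}, the number E + ω_x is an eigenvalue of the operator H^ω_𝒯 on ℓ²(𝒱) of multiplicity at least K − 1; that is, there exist K − 1 pairwise orthonormal vectors Ψ ∈ ℓ²(𝒱) with H^ω_𝒯 Ψ = (E + ω_x) Ψ. -/
/-!
Canopy tree setup.  The canopy tree `𝒯` of degree `K+1` has vertex set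
`𝒱 = ℤ × ℕ` and edges `{(x,n), (⌊x/K⌋, n+1)}`.  `canPar` is the parent map,
`canParIter k` its `k`-th iterate, `canBelow K v w` is the relation `v ≺ w`
(`v` lies on the shortest path from `w` to the boundary `∂𝒯 = ℤ × {0}`),
and `canLam K l w = Λ_l(w)`.
-/

/-- Vertex set of the canopy tree. -/
abbrev CanV : Type := ℤ × ℕ

/-- Parent map of the canopy tree of degree `K+1`: `(x,n) ↦ (⌊x/K⌋, n+1)`. -/
def canPar (K : ℕ) (v : CanV) : CanV := (Int.fdiv v.1 K, v.2 + 1)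

/-- `k`-th iterate of the parent map. -/
def canParIter (K k : ℕ) (v : CanV) : CanV := (canPar K)^[k] v

/-- `v ≺ w`: `v` lies on the shortest path from `w` to the boundary. -/
def canBelow (K : ℕ) (v w : CanV) : Prop := v.2 ≤ w.2 ∧ canParIter K (w.2 - v.2) v = w

/-- `Λ_l(w) = {v : v ≺ w, d(v,w) ≤ l}`. -/
def canLam (K l : ℕ) (w : CanV) : Set CanV := {v | canBelow K v w ∧ w.2 - v.2 ≤ l}

/-- The adjacency operator `Δ_𝒯` on functions on the canopy tree:
`(Δ u)(v) = Σ_{d(v,w)=1} u(w)`, i.e. the value at the parent of `v` plus the sum of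
the values at the `K` children of `v` (there are no children on the boundary level). -/
noncomputable def canAdjOp (K : ℕ) (u : CanV → ℂ) (v : CanV) : ℂ :=
  u (canPar K v) +
    if v.2 = 0 then 0 else ∑ r ∈ Finset.range K, u ((K : ℤ) * v.1 + (r : ℤ), v.2 - 1)

/-- The unique vertex `x ∈ 𝒩 = ∪_m 𝒱_{m(l+1)+l}` with `v ∈ Λ_l(x)`. -/
def canPot (K l : ℕ) (v : CanV) : CanV := canParIter K (l - v.2 % (l + 1)) v

/-- The random operator `H^ω_𝒯 = Δ_𝒯 + Σ_{x∈𝒩} ω_x P_{Λ_l(x)}`; since the sets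
`Λ_l(x)`, `x ∈ 𝒩`, partition `𝒱`, the potential at `v` is `ω` evaluated at the unique
`x ∈ 𝒩` with `v ∈ Λ_l(x)`. -/
noncomputable def canH (K l : ℕ) (ω : CanV → ℝ) (u : CanV → ℂ) (v : CanV) : ℂ :=
  canAdjOp K u v + (ω (canPot K l v) : ℂ) * u v

/-- `σ(Δ_{l-1})`: the set of (real) eigenvalues of the adjacency matrix of the finite tree
`Λ_{l-1}(x₀)` for `x₀ ∈ 𝒱_{l-1}` (all such trees are isomorphic, so we take
`x₀ = (0, l-1)`): those `E` admitting a nonzero eigenfunction supported in `Λ_{l-1}(x₀)`. -/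
def canLamSpec (K l : ℕ) : Set ℝ :=
  {E : ℝ | ∃ ψ : CanV → ℂ, ψ ≠ 0 ∧ (∀ v ∉ canLam K (l - 1) ((0 : ℤ), l - 1), ψ v = 0) ∧
    ∀ v ∈ canLam K (l - 1) ((0 : ℤ), l - 1), canAdjOp K ψ v = (E : ℂ) * ψ v}

/-!
Let `x = (a, m + 1)`, whose children are `(K a + r, m)` for `r < K`. Translating a
`Δ_m`-eigenfunction `ψ` on `Λ_m((0, m))` into each subtree `Λ_m((K a + r, m))` gives functions
`φ_r` with disjoint supports inside `Λ_{m+1}(x)`, where the potential is the constant `ω_x`.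
Each satisfies `(H - E - ω_x) φ_r = ψ(0, m) δ_x`: the only defect sits at the common parent `x`.
Hence `∑ β_r φ_r` is an eigenfunction whenever `∑ β_r = 0`, and an orthonormal basis of this
hyperplane of `ℂ^K` yields `K - 1` orthonormal eigenfunctions.
-/

open scoped ENNReal InnerProductSpace

lemma Memℓp.comp_equiv {α E : Type*} [NormedAddCommGroup E] {p : ℝ≥0∞} (hp : 0 < p.toReal)
    {f : α → E} (hf : Memℓp f p) (σ : α ≃ α) : Memℓp (f ∘ σ) p :=
  (memℓp_gen_iff hp).2 <| (σ.summable_iff (f := fun i => ‖f i‖ ^ p.toReal)).2 <|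
    (memℓp_gen_iff hp).1 hf

def lpComp {α : Type*} (σ : α ≃ α) (f : lp (fun _ : α => ℂ) 2) : lp (fun _ : α => ℂ) 2 :=
  ⟨f ∘ σ, (lp.memℓp f).comp_equiv (by norm_num) σ⟩

@[simp]
lemma lpComp_apply {α : Type*} (σ : α ≃ α) (f : lp (fun _ : α => ℂ) 2) (i : α) :
    lpComp σ f i = f (σ i) := rfl

lemma inner_lpComp {α : Type*} (σ : α ≃ α) (f g : lp (fun _ : α => ℂ) 2) :
    ⟪lpComp σ f, lpComp σ g⟫_ℂ = ⟪f, g⟫_ℂ := by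
  simp only [lp.inner_eq_tsum, lpComp_apply]
  exact σ.tsum_eq fun i => ⟪f i, g i⟫_ℂ

lemma tsum_conj_mul_eq_inner {α : Type*} (f g : lp (fun _ : α => ℂ) 2) :
    ∑' i, (starRingEnd ℂ) (f i) * g i = ⟪f, g⟫_ℂ := by
  simp only [lp.inner_eq_tsum, RCLike.inner_apply']

lemma exists_orthonormal_sum_eq_zero {n : ℕ} (hn : 0 < n) :
    ∃ b : Fin (n - 1) → EuclideanSpace ℂ (Fin n), Orthonormal ℂ b ∧ ∀ i, ∑ r, b i r = 0 := by
  set one : EuclideanSpace ℂ (Fin n) := WithLp.toLp 2 fun _ => 1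
  have hone : one ≠ 0 := fun h => by simpa [one] using congr_fun (congrArg WithLp.ofLp h) ⟨0, hn⟩
  have : Fact (Module.finrank ℂ (EuclideanSpace ℂ (Fin n)) = n - 1 + 1) :=
    ⟨by rw [finrank_euclideanSpace_fin]; omega⟩
  let B := (stdOrthonormalBasis ℂ (ℂ ∙ one)ᗮ).reindex
    (finCongr (Submodule.finrank_orthogonal_span_singleton (n := n - 1) hone))
  refine ⟨fun i => (B i : EuclideanSpace ℂ (Fin n)),
    B.orthonormal.comp_linearIsometry (ℂ ∙ one)ᗮ.subtypeₗᵢ, fun i => ?_⟩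
  have h := Submodule.inner_right_of_mem_orthogonal (Submodule.mem_span_singleton_self one) (B i).2
  simpa [one, PiLp.inner_apply] using h

namespace CanopyTree

variable {K : ℕ}

lemma canPar_eq (v : CanV) : canPar K v = (v.1 / K, v.2 + 1) := by
  simp [canPar, Int.fdiv_eq_ediv_of_nonneg]

lemma canParIter_eq (k : ℕ) (v : CanV) : canParIter K k v = (v.1 / (K : ℤ) ^ k, v.2 + k) := by
  induction k with
  | zero => simp [canParIter]
  | succ k ih =>
    rw [canParIter, Function.iterate_succ_apply', ← canParIter, ih, canPar_eq,
      Int.ediv_ediv_of_nonneg (by positivity), pow_succ, add_assoc]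

lemma canBelow_iff {v w : CanV} :
    canBelow K v w ↔ v.2 ≤ w.2 ∧ v.1 / (K : ℤ) ^ (w.2 - v.2) = w.1 := by
  rw [canBelow, canParIter_eq, Prod.ext_iff]
  constructor
  · rintro ⟨h, h1, -⟩; exact ⟨h, h1⟩
  · rintro ⟨h, h1⟩; exact ⟨h, h1, by simp only; omega⟩

lemma mem_canLam_full_iff {m : ℕ} {c : ℤ} {v : CanV} :
    v ∈ canLam K m (c, m) ↔ v.2 ≤ m ∧ v.1 / (K : ℤ) ^ (m - v.2) = c := by
  simp only [canLam, Set.mem_ofPred_eq, canBelow_iff]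
  exact ⟨fun h => h.1, fun h => ⟨h, by omega⟩⟩

lemma canLam_finite (hK : K ≠ 0) (l : ℕ) (w : CanV) : (canLam K l w).Finite := by
  refine (Set.finite_Iic w.2).biUnion (t := fun n =>
    Set.Ico (w.1 * (K : ℤ) ^ (w.2 - n)) ((w.1 + 1) * (K : ℤ) ^ (w.2 - n)) ×ˢ {n})
    (fun n _ => (Set.finite_Ico _ _).prod (Set.finite_singleton n)) |>.subset ?_
  rintro ⟨z, n⟩ ⟨hv, -⟩
  obtain ⟨hn, hz⟩ : n ≤ w.2 ∧ z / (K : ℤ) ^ (w.2 - n) = w.1 := canBelow_iff.1 hv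
  have hpos : (0 : ℤ) < (K : ℤ) ^ (w.2 - n) := by positivity
  simp only [Set.mem_iUnion, Set.mem_prod, Set.mem_Ico, Set.mem_singleton_iff]
  exact ⟨n, hn, ⟨(Int.le_ediv_iff_mul_le hpos).1 hz.ge, (Int.ediv_lt_iff_lt_mul hpos).1 (by omega)⟩, rfl⟩

lemma canPar_mem_canLam_full_iff {m : ℕ} {c : ℤ} {v : CanV} (hv : v.2 < m) :
    canPar K v ∈ canLam K m (c, m) ↔ v ∈ canLam K m (c, m) := by
  have hexp : m - v.2 = m - (v.2 + 1) + 1 := by omega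
  rw [mem_canLam_full_iff, mem_canLam_full_iff, canPar_eq, hexp, pow_succ',
    ← Int.ediv_ediv_of_nonneg (by positivity)]
  exact ⟨fun h => ⟨by omega, h.2⟩, fun h => ⟨by simp only; omega, h.2⟩⟩

lemma mul_add_ediv_of_lt {z : ℤ} {r : ℕ} (hr : r < K) : ((K : ℤ) * z + r) / K = z := by
  rw [add_comm, Int.add_mul_ediv_left _ _ (by omega), Int.ediv_eq_zero_of_lt (by omega) (by omega),
    zero_add]

lemma canPar_child {z : ℤ} {n r : ℕ} (hr : r < K) : canPar K ((K : ℤ) * z + r, n) = (z, n + 1) := by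
  rw [canPar_eq, mul_add_ediv_of_lt hr]

lemma canPot_of_mem_canLam {m : ℕ} {c : ℤ} {v : CanV} (hv : v ∈ canLam K m (c, m)) :
    canPot K (m + 1) v = (c / K, m + 1) := by
  obtain ⟨hvm, hc⟩ := mem_canLam_full_iff.1 hv
  have hexp : m + 1 - v.2 = m - v.2 + 1 := by omega
  rw [canPot, Nat.mod_eq_of_lt (by omega), canParIter_eq, hexp, pow_succ,
    ← Int.ediv_ediv_of_nonneg (by positivity), hc]
  simp only [Prod.mk.injEq, true_and]
  omega

lemma canAdjOp_eq_zero_of_not_mem {m : ℕ} {c : ℤ} {ψ : CanV → ℂ}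
    (hψ : ∀ w ∉ canLam K m (c, m), ψ w = 0) {v : CanV} (hv : v ∉ canLam K m (c, m))
    (hvm : v.2 ≤ m) : canAdjOp K ψ v = 0 := by
  have hpar : canPar K v ∉ canLam K m (c, m) := fun h =>
    hv ((canPar_mem_canLam_full_iff (by simpa [canPar] using (mem_canLam_full_iff.1 h).1)).1 h)
  rw [canAdjOp, hψ _ hpar, zero_add]
  obtain ⟨z, n⟩ := v
  by_cases hn : n = 0
  · simp [hn]
  · have hchild : ∀ r ∈ Finset.range K, ((K : ℤ) * z + r, n - 1) ∉ canLam K m (c, m) :=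
      fun r hr h => hv <| by
        rwa [← canPar_mem_canLam_full_iff (by simp only at hvm ⊢; omega),
          canPar_child (Finset.mem_range.1 hr), Nat.sub_add_cancel (by omega)] at h
    simp [hn, Finset.sum_eq_zero fun r hr => hψ _ (hchild r hr)]

/-- Translation moving the subtree `Λ_m((c, m))` onto `Λ_m((0, m))`. -/
def canShift (K m : ℕ) (c : ℤ) : CanV ≃ CanV where
  toFun v := (v.1 - c * (K : ℤ) ^ (m - v.2), v.2)
  invFun v := (v.1 + c * (K : ℤ) ^ (m - v.2), v.2)
  left_inv v := by simp
  right_inv v := by simp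

@[simp]
lemma canShift_apply (m : ℕ) (c : ℤ) (v : CanV) :
    canShift K m c v = (v.1 - c * (K : ℤ) ^ (m - v.2), v.2) := rfl

lemma canShift_mem_canLam_iff (hK : K ≠ 0) {m : ℕ} {c : ℤ} {v : CanV} :
    canShift K m c v ∈ canLam K m (0, m) ↔ v ∈ canLam K m (c, m) := by
  rw [mem_canLam_full_iff, mem_canLam_full_iff, canShift_apply,
    Int.sub_mul_ediv_right _ _ (by positivity), sub_eq_zero]

lemma canAdjOp_comp_canShift (hK : K ≠ 0) {m : ℕ} (c : ℤ) {u : CanV → ℂ}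
    (hu : ∀ w : CanV, m < w.2 → u w = 0) {v : CanV} (hv : v.2 ≤ m) :
    canAdjOp K (u ∘ canShift K m c) v = canAdjOp K u (canShift K m c v) := by
  obtain ⟨z, n⟩ := v
  simp only at hv
  simp only [canAdjOp, Function.comp_apply, canShift_apply, canPar_eq]
  congr 1
  · rcases hv.lt_or_eq with hn | rfl
    · have hexp : m - n = m - (n + 1) + 1 := by omega
      rw [hexp, pow_succ, ← mul_assoc, Int.sub_mul_ediv_right _ _ (by positivity)]
    · rw [hu _ (by simp), hu _ (by simp)]
  · by_cases hn : n = 0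
    · simp [hn]
    · have hexp : m - (n - 1) = m - n + 1 := by omega
      simp only [hn, if_false, hexp, pow_succ]
      ring_nf

section Translate

variable {m : ℕ} {ψ : CanV → ℂ}

lemma eq_zero_of_lt_snd (hψ : ∀ w ∉ canLam K m (0, m), ψ w = 0) {w : CanV} (hw : m < w.2) :
    ψ w = 0 :=
  hψ w fun h => by have := (mem_canLam_full_iff.1 h).1; omega

lemma canAdjOp_comp_canShift_top (hψ : ∀ w ∉ canLam K m (0, m), ψ w = 0) (a z : ℤ) {r : ℕ}
    (hr : r < K) :
    canAdjOp K (ψ ∘ canShift K m (K * a + r)) (z, m + 1) = if z = a then ψ (0, m) else 0 := by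
  have hrow : ∀ y : ℤ, y ≠ 0 → ψ (y, m) = 0 := fun y hy =>
    hψ _ (by simpa [mem_canLam_full_iff] using hy)
  rw [canAdjOp, Function.comp_apply, eq_zero_of_lt_snd hψ (by simp [canPar]), zero_add,
    if_neg (by omega)]
  simp only [Function.comp_apply, canShift_apply, Nat.add_sub_cancel, Nat.sub_self, pow_zero,
    mul_one]
  split_ifs with hza
  · subst hza
    rw [Finset.sum_eq_single_of_mem r (Finset.mem_range.2 hr) fun t _ htr => hrow _ (by omega)]
    simp
  · refine Finset.sum_eq_zero fun t ht => hrow _ fun h => hza ?_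
    rw [← mul_add_ediv_of_lt (z := z) (Finset.mem_range.1 ht), ← mul_add_ediv_of_lt (z := a) hr]
    congr 1
    omega

lemma canH_comp_canShift (hK : K ≠ 0) (ω : CanV → ℝ) {E : ℝ}
    (hψ : ∀ w ∉ canLam K m (0, m), ψ w = 0)
    (hE : ∀ w ∈ canLam K m (0, m), canAdjOp K ψ w = E * ψ w) (a : ℤ) {r : ℕ} (hr : r < K)
    (v : CanV) :
    canH K (m + 1) ω (ψ ∘ canShift K m (K * a + r)) v =
      ((E + ω (a, m + 1) : ℝ) : ℂ) * (ψ ∘ canShift K m (K * a + r)) v +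
        if v = (a, m + 1) then ψ (0, m) else 0 := by
  obtain ⟨z, n⟩ := v
  rcases lt_trichotomy n (m + 1) with hn | rfl | hn
  · have hne : (z, n) ≠ (a, m + 1) := by simp only [ne_eq, Prod.mk.injEq]; omega
    rw [canH, canAdjOp_comp_canShift hK _ (fun w => eq_zero_of_lt_snd hψ) (by simp only; omega),
      if_neg hne, add_zero, Function.comp_apply]
    by_cases hmem : canShift K m (K * a + r) (z, n) ∈ canLam K m (0, m)
    · rw [hE _ hmem, canPot_of_mem_canLam ((canShift_mem_canLam_iff hK).1 hmem),
        mul_add_ediv_of_lt hr]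
      push_cast
      ring
    · rw [canAdjOp_eq_zero_of_not_mem hψ hmem (by simp only [canShift_apply]; omega), hψ _ hmem]
      simp
  · rw [canH, canAdjOp_comp_canShift_top hψ a z hr, Function.comp_apply,
      eq_zero_of_lt_snd hψ (w := canShift K m _ (z, m + 1)) (by simp)]
    simp
  · have hhigh : ∀ w : CanV, m < w.2 → (ψ ∘ canShift K m (K * a + r)) w = 0 :=
      fun w hw => eq_zero_of_lt_snd hψ (by simpa using hw)
    have hne : (z, n) ≠ (a, m + 1) := by simp only [ne_eq, Prod.mk.injEq]; omega
    simp only [canH, canAdjOp, hhigh _ (show m < (canPar K (z, n)).2 by simp [canPar]; omega),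
      hhigh (z, n) (by simp only; omega), if_neg hne,
      hhigh (_, n - 1) (show m < n - 1 by omega)]
    simp

end Translate

noncomputable def canAdjOpₗ (K : ℕ) : (CanV → ℂ) →ₗ[ℂ] CanV → ℂ where
  toFun := canAdjOp K
  map_add' u w := by
    ext v
    simp only [canAdjOp, Pi.add_apply]
    split_ifs
    · ring
    · rw [Finset.sum_add_distrib]
      ring
  map_smul' c u := by
    ext v
    simp only [canAdjOp, Pi.smul_apply, smul_eq_mul, RingHom.id_apply]
    split_ifs <;> simp [Finset.mul_sum, mul_add]

lemma canAdjOp_smul (c : ℂ) (u : CanV → ℂ) (v : CanV) :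
    canAdjOp K (c • u) v = c * canAdjOp K u v :=
  congr_fun ((canAdjOpₗ K).map_smul c u) v

noncomputable def canHₗ (K l : ℕ) (ω : CanV → ℝ) : (CanV → ℂ) →ₗ[ℂ] CanV → ℂ :=
  canAdjOpₗ K + LinearMap.pi fun v => (ω (canPot K l v) : ℂ) • LinearMap.proj v

lemma canHₗ_apply (l : ℕ) (ω : CanV → ℝ) (u : CanV → ℂ) : canHₗ K l ω u = canH K l ω u := rfl

lemma canH_sum_comp_canShift (hK : K ≠ 0) {m : ℕ} {ψ : CanV → ℂ} (ω : CanV → ℝ) {E : ℝ}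
    (hψ : ∀ w ∉ canLam K m (0, m), ψ w = 0)
    (hE : ∀ w ∈ canLam K m (0, m), canAdjOp K ψ w = E * ψ w) (a : ℤ) {β : Fin K → ℂ}
    (hβ : ∑ r, β r = 0) :
    canH K (m + 1) ω (∑ r, β r • (ψ ∘ canShift K m (K * a + r))) =
      ((E + ω (a, m + 1) : ℝ) : ℂ) • ∑ r, β r • (ψ ∘ canShift K m (K * a + r)) := by
  ext v
  have hterm (r : Fin K) := canH_comp_canShift hK ω hψ hE a r.2 v
  rw [← canHₗ_apply, map_sum]
  simp only [map_smul, Finset.sum_apply, Pi.smul_apply, smul_eq_mul, canHₗ_apply, hterm, mul_add,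
    Finset.sum_add_distrib]
  rw [← Finset.sum_mul, hβ, zero_mul, add_zero, Finset.mul_sum]
  exact Finset.sum_congr rfl fun r _ => by ring

lemma exists_unit_eigenfunction (hK : K ≠ 0) {m : ℕ} {E : ℝ} (hE : E ∈ canLamSpec K (m + 1)) :
    ∃ ψ : lp (fun _ : CanV => ℂ) 2, ‖ψ‖ = 1 ∧ (∀ w ∉ canLam K m (0, m), ψ w = 0) ∧
      ∀ w ∈ canLam K m (0, m), canAdjOp K ψ w = E * ψ w := by
  obtain ⟨ψ, hψ0, hψ, hψE⟩ := hE
  simp only [Nat.add_sub_cancel] at hψ hψE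
  have hfin : {w | ψ w ≠ 0}.Finite :=
    (canLam_finite hK m (0, m)).subset fun w hw => by_contra fun h => hw (hψ w h)
  let f : lp (fun _ : CanV => ℂ) 2 := ⟨ψ, (memℓp_zero_iff.2 hfin).of_exponent_ge (by norm_num)⟩
  have hf : f ≠ 0 := fun h => hψ0 (congrArg (⇑) h)
  refine ⟨(‖f‖⁻¹ : ℂ) • f, norm_smul_inv_norm hf, fun w hw => ?_, fun w hw => ?_⟩
  · simp [lp.coeFn_smul, f, hψ w hw]
  · change canAdjOp K ((‖f‖⁻¹ : ℂ) • ψ) w = E * ((‖f‖⁻¹ : ℂ) • ψ) w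
    rw [canAdjOp_smul, hψE w hw, Pi.smul_apply, smul_eq_mul, mul_left_comm]

lemma orthonormal_lpComp_canShift (hK : K ≠ 0) {m : ℕ} {ψ : lp (fun _ : CanV => ℂ) 2}
    (hψ1 : ‖ψ‖ = 1) (hψ : ∀ w ∉ canLam K m (0, m), ψ w = 0) {ι : Type*} {c : ι → ℤ}
    (hc : Function.Injective c) :
    Orthonormal ℂ fun i => lpComp (canShift K m (c i)) ψ := by
  classical
  rw [orthonormal_iff_ite]
  intro i j
  split_ifs with hij
  · rw [hij, inner_lpComp, inner_self_eq_norm_sq_to_K, hψ1]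
    simp
  · rw [lp.inner_eq_tsum]
    refine (tsum_congr fun v => ?_).trans tsum_zero
    have hdisj : canShift K m (c i) v ∉ canLam K m (0, m) ∨
        canShift K m (c j) v ∉ canLam K m (0, m) := by
      rw [canShift_mem_canLam_iff hK, canShift_mem_canLam_iff hK, mem_canLam_full_iff,
        mem_canLam_full_iff, ← not_and_or]
      exact fun h => hij (hc (h.1.2.symm.trans h.2.2))
    rcases hdisj with h | h <;> simp only [lpComp_apply, hψ _ h, inner_zero_left, inner_zero_right]

end CanopyTree

open CanopyTree in
/-- For `K > 2`, `l ≥ 2`, any real family `ω`, any vertex `x ∈ 𝒱_l` and any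
eigenvalue `E` of `Δ_{l-1}`, the number `E + ω_x` is an eigenvalue of `H^ω_𝒯` of multiplicity
at least `K - 1`: there are `K - 1` pairwise orthonormal `Ψ ∈ ℓ²(𝒱)` with
`H^ω_𝒯 Ψ = (E + ω_x) Ψ`. -/
theorem canopy_eigenvalue_multiplicity
    (K l : ℕ) (hK : 2 < K) (hl : 2 ≤ l) (ω : CanV → ℝ)
    (x : CanV) (hx : x.2 = l) (E : ℝ) (hE : E ∈ canLamSpec K l) :
    ∃ Ψ : Fin (K - 1) → CanV → ℂ,
      (∀ i, Memℓp (Ψ i) 2) ∧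
      (∀ i v, canH K l ω (Ψ i) v = ((E + ω x : ℝ) : ℂ) * Ψ i v) ∧
      (∀ i j, ∑' v : CanV, (starRingEnd ℂ) (Ψ i v) * Ψ j v = if i = j then 1 else 0) := by
  obtain ⟨m, rfl⟩ : ∃ m, l = m + 1 := ⟨l - 1, by omega⟩
  obtain ⟨a, n⟩ := x
  obtain rfl : n = m + 1 := hx
  have hK0 : K ≠ 0 := by omega
  obtain ⟨ψ, hψ1, hψ, hψE⟩ := exists_unit_eigenfunction hK0 hE
  obtain ⟨b, hb, hbsum⟩ := exists_orthonormal_sum_eq_zero (n := K) (by omega)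
  let e (r : Fin K) := lpComp (canShift K m (K * a + r)) ψ
  have he : Orthonormal ℂ e :=
    orthonormal_lpComp_canShift hK0 hψ1 hψ fun r s h => Fin.ext (by simpa using h)
  have hΨ (i) : ⇑(∑ r, b i r • e r) = ∑ r, b i r • (⇑ψ ∘ canShift K m (K * a + r)) := by
    rw [lp.coeFn_sum]
    simp only [lp.coeFn_smul]
    rfl
  refine ⟨fun i => ⇑(∑ r, b i r • e r), fun i => lp.memℓp _, fun i v => ?_, fun i j => ?_⟩
  · beta_reduce
    rw [hΨ, canH_sum_comp_canShift hK0 ω hψ hψE a (hbsum i)]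
    rfl
  · rw [tsum_conj_mul_eq_inner, he.inner_sum, ← orthonormal_iff_ite.1 hb i j, PiLp.inner_apply]
    simp only [RCLike.inner_apply']
end

section
/- Fix integers K > 2 and l ≥ 2, a real family ω = (ω_x)_{x∈𝒩}, a vertex x ∈ 𝒱_l, an eigenvalue E of Δ_{l−1} and a normalized eigenvector ψ of Δ_{l−1} for E on the abstract tree 𝒯_{l−1} with root e. For a tuple α = (α_y)_{y∈N_x} of reals with Σ_{y∈N_x} α_y = 0, define Ψ^{(α)} ∈ ℓ²(𝒱) by Ψ^{(α)}(p) = α_y ψ(φ_y(p)) if p ≺ y for some y ∈ N_x, and Ψ^{(α)}(p) = 0 otherwise. Then H^ω_𝒯 Ψ^{(α)} = (E + ω_x) Ψ^{(α)}, and for any two such tuples α, β one has ⟨Ψ^{(α)}, Ψ^{(β)}⟩_{ℓ²(𝒱)} = Σ_{y∈N_x} α_y β_y. -/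
/-- The vector `Ψ^{(α)}`: for `x ∈ 𝒱_l`, the forward neighbours of `x` are
`y = (K·x₁ + r, l-1)`, `0 ≤ r < K`; a vertex `p` satisfies `p ≺ y` for some `y ∈ N_x`
iff `p.2 < l` and the `(l - p.2)`-fold parent of `p` is `x`, in which case
`y = canParIter K (l-1-p.2) p` and the isomorphism `φ_y : Λ_{l-1}(y) → 𝒯_{l-1}`
(onto the fixed copy `Λ_{l-1}((0,l-1))` with root `e = (0,l-1)`) is
`(w, j) ↦ (w - y₁·K^(l-1-j), j)`.  Then `Ψ^{(α)}(p) = α_y ψ(φ_y(p))` there and `0` elsewhere. -/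
noncomputable def canPsi (K l : ℕ) (x : CanV) (α : CanV → ℝ) (ψ : CanV → ℂ) (p : CanV) : ℂ :=
  if p.2 < l ∧ canParIter K (l - p.2) p = x then
    ((α (canParIter K (l - 1 - p.2) p) : ℝ) : ℂ) *
      ψ (p.1 - (canParIter K (l - 1 - p.2) p).1 * (K : ℤ) ^ (l - 1 - p.2), p.2)
  else 0

/-!
Translating `ψ` from `Λ_{l-1}((0, l-1))` onto each subtree `Λ_{l-1}(y)`, `y ∈ N_x`, gives vectors
`τ_y ψ` with disjoint supports and `Ψ^{(α)} = ∑_y α_y τ_y ψ`. A vector supported on a full subtree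
`Λ_n(w)` and satisfying the eigenvalue equation there satisfies it everywhere except at the parent
of `w`, where `Δ` picks up the value at `w`. All the `y ∈ N_x` share the parent `x` and
`τ_y ψ (y) = ψ(e)`, so the defects add up to `(∑_y α_y) ψ(e) δ_x = 0`; the potential is the
constant `ω_x` on `Λ_l(x)`. The inner product formula follows from the disjointness of the supports.
-/

open Finset

def canChild (K : ℕ) (v : CanV) (r : ℕ) : CanV := ((K : ℤ) * v.1 + r, v.2 - 1)

/-- Carries the subtree below `(0, w.2)` onto the subtree below `w`; its inverse restricts to the
paper's `φ_w`. -/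
def canShift (K : ℕ) (w : CanV) : CanV ≃ CanV where
  toFun v := (v.1 + w.1 * (K : ℤ) ^ (w.2 - v.2), v.2)
  invFun v := (v.1 - w.1 * (K : ℤ) ^ (w.2 - v.2), v.2)
  left_inv v := by simp
  right_inv v := by simp

/-- `u` is, extended by zero, an eigenvector of the adjacency matrix of the finite tree
`Λ_{w.2}(w)`. -/
structure IsSubtreeEigenvector (K : ℕ) (w : CanV) (E : ℂ) (u : CanV → ℂ) : Prop where
  eq_zero_of_not_canBelow : ∀ v, ¬canBelow K v w → u v = 0
  canAdjOp_eq : ∀ v, canBelow K v w → canAdjOp K u v = E * u v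

section Tree

variable {K : ℕ}

theorem canAdjOp_eq_canChild (u : CanV → ℂ) (v : CanV) :
    canAdjOp K u v =
      u (canPar K v) + if v.2 = 0 then 0 else ∑ r ∈ range K, u (canChild K v r) :=
  rfl

theorem canPar_eq (v : CanV) : canPar K v = (v.1 / K, v.2 + 1) := by
  rw [canPar, Int.fdiv_eq_ediv_of_nonneg _ (Int.natCast_nonneg K)]

theorem canParIter_succ (k : ℕ) (v : CanV) :
    canParIter K (k + 1) v = canParIter K k (canPar K v) :=
  Function.iterate_succ_apply _ _ _

theorem canParIter_succ' (k : ℕ) (v : CanV) :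
    canParIter K (k + 1) v = canPar K (canParIter K k v) :=
  Function.iterate_succ_apply' _ _ _

theorem canParIter_eq (k : ℕ) (v : CanV) :
    canParIter K k v = (v.1 / (K : ℤ) ^ k, v.2 + k) := by
  induction k with
  | zero => simp [canParIter]
  | succ k ih =>
    rw [canParIter_succ', ih, canPar_eq, pow_succ,
      Int.ediv_ediv_of_nonneg (pow_nonneg (Int.natCast_nonneg K) k)]
    rfl

theorem canBelow_iff {v w : CanV} :
    canBelow K v w ↔ v.2 ≤ w.2 ∧ v.1 / (K : ℤ) ^ (w.2 - v.2) = w.1 := by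
  rw [canBelow, canParIter_eq]
  exact and_congr_right fun h => ⟨fun e => congrArg Prod.fst e,
    fun e => Prod.ext e (Nat.add_sub_cancel' h)⟩

theorem canBelow_canParIter (k : ℕ) (v : CanV) : canBelow K v (canParIter K k v) := by
  rw [canBelow, canParIter_eq, Nat.add_sub_cancel_left, canParIter_eq]
  exact ⟨Nat.le_add_right _ _, rfl⟩

theorem mem_canLam_self_iff {v w : CanV} : v ∈ canLam K w.2 w ↔ canBelow K v w :=
  ⟨And.left, fun h => ⟨h, Nat.sub_le _ _⟩⟩

theorem canBelow.eq_of_snd_eq {v w w' : CanV} (h : canBelow K v w) (h' : canBelow K v w')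
    (hw : w.2 = w'.2) : w = w' := by
  rw [← h.2, ← h'.2, hw]

theorem canBelow_of_canBelow_canPar {v w : CanV} (h : canBelow K (canPar K v) w) :
    canBelow K v w := by
  obtain ⟨hle, heq⟩ := h
  change v.2 + 1 ≤ w.2 at hle
  refine ⟨by omega, ?_⟩
  rw [show w.2 - v.2 = w.2 - (v.2 + 1) + 1 by omega, canParIter_succ]
  exact heq

theorem canBelow.canPar_of_ne {v w : CanV} (h : canBelow K v w) (hne : v ≠ w) :
    canBelow K (canPar K v) w := by
  obtain ⟨hle, heq⟩ := h
  have hlt : v.2 < w.2 := lt_of_le_of_ne hle fun h => hne (by rw [← heq, h, Nat.sub_self]; rfl)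
  refine ⟨hlt, ?_⟩
  change canParIter K (w.2 - (v.2 + 1)) (canPar K v) = w
  rw [← canParIter_succ, show w.2 - (v.2 + 1) + 1 = w.2 - v.2 by omega, heq]

theorem canBelow.canBelow_canPar {v w : CanV} (h : canBelow K v w) :
    canBelow K v (canPar K w) := by
  refine ⟨Nat.le_succ_of_le h.1, ?_⟩
  change canParIter K (w.2 + 1 - v.2) v = _
  rw [show w.2 + 1 - v.2 = w.2 - v.2 + 1 by have := h.1; omega, canParIter_succ', h.2]

theorem canChild_injective (v : CanV) : Function.Injective (canChild K v) := fun r s h => by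
  have := congrArg Prod.fst h
  simp only [canChild] at this
  omega

theorem canPar_canChild (hK : 0 < K) {v : CanV} (hv : v.2 ≠ 0) {r : ℕ} (hr : r < K) :
    canPar K (canChild K v r) = v := by
  rw [canPar_eq, canChild, Int.mul_add_ediv_left _ _ (by exact_mod_cast hK.ne'),
    Int.ediv_eq_zero_of_lt (Int.natCast_nonneg r) (by exact_mod_cast hr), add_zero]
  exact Prod.ext rfl (Nat.sub_add_cancel (Nat.pos_of_ne_zero hv))

theorem exists_canChild_canPar_eq (hK : 0 < K) (v : CanV) :
    ∃ r < K, canChild K (canPar K v) r = v := by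
  have hKz : (0 : ℤ) < K := by exact_mod_cast hK
  refine ⟨(v.1 % K).toNat, by have := Int.emod_lt_of_pos v.1 hKz; omega, ?_⟩
  rw [canChild, canPar_eq, Int.toNat_of_nonneg (Int.emod_nonneg _ hKz.ne'),
    Int.mul_ediv_add_emod]
  rfl

theorem sum_range_ite_canChild_eq {M : Type*} [AddCommMonoid M] (hK : 0 < K) {v : CanV}
    (hv : v.2 ≠ 0) (w : CanV) (a : M) :
    ∑ r ∈ range K, (if canChild K v r = w then a else 0) = if v = canPar K w then a else 0 := by
  split_ifs with hvw
  · subst hvw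
    obtain ⟨r₀, hr₀, hw⟩ := exists_canChild_canPar_eq hK w
    rw [Finset.sum_eq_single_of_mem r₀ (mem_range.2 hr₀), if_pos hw]
    exact fun r _ hne => if_neg fun hr => hne (canChild_injective _ (hr.trans hw.symm))
  · refine Finset.sum_eq_zero fun r hr => if_neg fun hw => hvw ?_
    rw [← hw, canPar_canChild hK hv (mem_range.1 hr)]

theorem canAdjOp_sum_mul {ι : Type*} (s : Finset ι) (c : ι → ℂ) (f : ι → CanV → ℂ)
    (v : CanV) :
    canAdjOp K (fun p => ∑ i ∈ s, c i * f i p) v = ∑ i ∈ s, c i * canAdjOp K (f i) v := by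
  simp only [canAdjOp_eq_canChild, mul_add, sum_add_distrib, mul_ite, mul_zero]
  split_ifs
  · rw [sum_const_zero]
  · rw [Finset.sum_comm]
    simp only [mul_sum]

theorem IsSubtreeEigenvector.canAdjOp_eq_add (hK : 0 < K) {w : CanV} {E : ℂ} {u : CanV → ℂ}
    (hu : IsSubtreeEigenvector K w E u) (v : CanV) :
    canAdjOp K u v = E * u v + if v = canPar K w then u w else 0 := by
  by_cases hv : canBelow K v w
  · rw [hu.canAdjOp_eq v hv, if_neg, add_zero]
    rintro rfl
    exact Nat.not_succ_le_self _ hv.1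
  rw [canAdjOp_eq_canChild, hu.eq_zero_of_not_canBelow v hv,
    hu.eq_zero_of_not_canBelow _ (mt canBelow_of_canBelow_canPar hv), mul_zero, zero_add, zero_add]
  by_cases h0 : v.2 = 0
  · rw [if_pos h0, if_neg]
    rintro rfl
    exact Nat.succ_ne_zero _ h0
  have hchild : ∀ r ∈ range K, u (canChild K v r) = if canChild K v r = w then u w else 0 := by
    intro r hr
    split_ifs with hw
    · rw [hw]
    · refine hu.eq_zero_of_not_canBelow _ fun hc => hv ?_
      simpa only [canPar_canChild hK h0 (mem_range.1 hr)] using hc.canPar_of_ne hw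
  rw [if_neg h0, Finset.sum_congr rfl hchild, sum_range_ite_canChild_eq hK h0]

end Tree

section Shift

variable {K : ℕ}

theorem canShift_apply (w v : CanV) :
    canShift K w v = (v.1 + w.1 * (K : ℤ) ^ (w.2 - v.2), v.2) :=
  rfl

theorem canShift_symm_apply (w v : CanV) :
    (canShift K w).symm v = (v.1 - w.1 * (K : ℤ) ^ (w.2 - v.2), v.2) :=
  rfl

theorem canShift_symm_self (w : CanV) : (canShift K w).symm w = (0, w.2) := by
  simp [canShift_symm_apply]

theorem canBelow_canShift_iff (hK : 0 < K) {w v : CanV} :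
    canBelow K (canShift K w v) w ↔ canBelow K v (0, w.2) := by
  have hpow : (K : ℤ) ^ (w.2 - v.2) ≠ 0 := pow_ne_zero _ (by exact_mod_cast hK.ne')
  rw [canBelow_iff, canBelow_iff, canShift_apply, Int.add_mul_ediv_right _ _ hpow]
  exact and_congr_right fun _ => add_eq_right

theorem apply_canShift_symm_eq_zero (hK : 0 < K) {w : CanV} {ψ : CanV → ℂ}
    (hψ : ∀ v, ¬canBelow K v (0, w.2) → ψ v = 0) {p : CanV} (hp : ¬canBelow K p w) :
    ψ ((canShift K w).symm p) = 0 :=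
  hψ _ fun h => hp (by simpa using (canBelow_canShift_iff hK).2 h)

/-- At `p.2 = w.2` the two parents differ, but both lie at level `w.2 + 1`, where `u` vanishes. -/
theorem canAdjOp_comp_canShift_symm (hK : 0 < K) {w : CanV} {u : CanV → ℂ}
    (hu : ∀ a, u (a, w.2 + 1) = 0) {p : CanV} (hp : p.2 ≤ w.2) :
    canAdjOp K (u ∘ (canShift K w).symm) p = canAdjOp K u ((canShift K w).symm p) := by
  simp only [canAdjOp_eq_canChild, Function.comp_apply, canShift_symm_apply]
  congr 1
  · rw [canPar_eq, canPar_eq]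
    rcases hp.lt_or_eq with hlt | heq
    · congr 2
      rw [show w.2 - p.2 = w.2 - (p.2 + 1) + 1 by omega, pow_succ,
        show p.1 - w.1 * ((K : ℤ) ^ (w.2 - (p.2 + 1)) * K)
          = p.1 + -(w.1 * (K : ℤ) ^ (w.2 - (p.2 + 1))) * K by ring,
        Int.add_mul_ediv_right _ _ (by exact_mod_cast hK.ne')]
      ring
    · simp only [heq, hu]
  · split_ifs with h0
    · rfl
    refine Finset.sum_congr rfl fun r _ => congrArg u (Prod.ext ?_ rfl)
    simp only [canChild]
    rw [show w.2 - (p.2 - 1) = w.2 - p.2 + 1 by omega, pow_succ]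
    ring

theorem IsSubtreeEigenvector.comp_canShift_symm (hK : 0 < K) {w : CanV} {E : ℂ}
    {ψ : CanV → ℂ} (hψ : IsSubtreeEigenvector K (0, w.2) E ψ) :
    IsSubtreeEigenvector K w E (ψ ∘ (canShift K w).symm) where
  eq_zero_of_not_canBelow _ hp := apply_canShift_symm_eq_zero hK hψ.eq_zero_of_not_canBelow hp
  canAdjOp_eq p hp := by
    have hψ_above : ∀ a, ψ (a, w.2 + 1) = 0 := fun a =>
      hψ.eq_zero_of_not_canBelow _ fun h => Nat.not_succ_le_self _ h.1
    rw [canAdjOp_comp_canShift_symm hK hψ_above hp.1,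
      hψ.canAdjOp_eq _ ((canBelow_canShift_iff hK).1 (by simpa using hp))]
    rfl

end Shift

theorem tsum_conj_sum_mul_sum {α ι : Type*} (s : Finset ι) (a b : ι → ℂ) {f : ι → α → ℂ}
    (hdisj : (s : Set ι).PairwiseDisjoint fun i => Function.support (f i))
    (hf : ∀ i ∈ s, Summable fun p => starRingEnd ℂ (f i p) * f i p) :
    ∑' p, starRingEnd ℂ (∑ i ∈ s, a i * f i p) * ∑ i ∈ s, b i * f i p
      = ∑ i ∈ s, starRingEnd ℂ (a i) * b i * ∑' p, starRingEnd ℂ (f i p) * f i p := by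
  have hdiag : ∀ p, starRingEnd ℂ (∑ i ∈ s, a i * f i p) * ∑ j ∈ s, b j * f j p
      = ∑ i ∈ s, starRingEnd ℂ (a i) * b i * (starRingEnd ℂ (f i p) * f i p) := by
    intro p
    rw [map_sum, Finset.sum_mul_sum]
    refine Finset.sum_congr rfl fun i hi => ?_
    rw [Finset.sum_eq_single_of_mem i hi]
    · rw [map_mul]
      ring
    · intro j hj hji
      by_cases hpj : f j p = 0
      · rw [hpj, mul_zero, mul_zero]
      · rw [Function.notMem_support.1 (Set.disjoint_right.1 (hdisj hi hj hji.symm) hpj),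
          mul_zero, map_zero, zero_mul]
  rw [tsum_congr hdiag, Summable.tsum_finsetSum fun i hi => (hf i hi).mul_left _]
  exact Finset.sum_congr rfl fun i _ => tsum_mul_left

section Psi

variable {K l : ℕ} {x : CanV} {ψ : CanV → ℂ}

theorem canBelow_of_canPsi_ne_zero {α : CanV → ℝ} (hx : x.2 = l) {p : CanV}
    (hp : canPsi K l x α ψ p ≠ 0) : canBelow K p x := by
  subst hx
  unfold canPsi at hp
  split_ifs at hp with h
  · exact ⟨h.1.le, h.2⟩
  · exact absurd rfl hp

theorem canPot_of_canBelow (hx : x.2 = l) {p : CanV} (h : canBelow K p x) : canPot K l p = x := by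
  subst hx
  rw [canPot, Nat.mod_eq_of_lt (Nat.lt_succ_of_le h.1)]
  exact h.2

theorem canPot_mul_canPsi (hx : x.2 = l) (ω : CanV → ℝ) (α : CanV → ℝ) (p : CanV) :
    (ω (canPot K l p) : ℂ) * canPsi K l x α ψ p = ω x * canPsi K l x α ψ p := by
  by_cases h : canPsi K l x α ψ p = 0
  · rw [h, mul_zero, mul_zero]
  · rw [canPot_of_canBelow hx (canBelow_of_canPsi_ne_zero hx h)]

theorem canPsi_eq_sum {α : CanV → ℝ} (hK : 0 < K) (hx : x.2 = l) (hl : 1 ≤ l)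
    (hψ : ∀ v, ¬canBelow K v (0, l - 1) → ψ v = 0) (p : CanV) :
    canPsi K l x α ψ p
      = ∑ r ∈ range K, (α (canChild K x r) : ℂ) * ψ ((canShift K (canChild K x r)).symm p) := by
  obtain ⟨x₁, x₂⟩ := x
  subst hx
  have hzero : ∀ r, ¬canBelow K p (canChild K (x₁, x₂) r) →
      ψ ((canShift K (canChild K (x₁, x₂) r)).symm p) = 0 :=
    fun r => apply_canShift_symm_eq_zero hK hψ
  unfold canPsi
  split_ifs with h
  · obtain ⟨hpl, hpx⟩ := h
    set y := canParIter K (x₂ - 1 - p.2) p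
    have hyx : canPar K y = (x₁, x₂) := by
      rw [← canParIter_succ', show x₂ - 1 - p.2 + 1 = x₂ - p.2 by omega, hpx]
    obtain ⟨r₀, hr₀, hy⟩ := exists_canChild_canPar_eq hK y
    rw [hyx] at hy
    have hpy : canBelow K p (canChild K (x₁, x₂) r₀) := hy ▸ canBelow_canParIter _ p
    rw [Finset.sum_eq_single_of_mem r₀ (mem_range.2 hr₀), ← hy]
    · rfl
    · intro r _ hne
      rw [hzero r fun hpr => hne (canChild_injective _ (hpr.eq_of_snd_eq hpy rfl)), mul_zero]
  · refine (Finset.sum_eq_zero fun r hr => ?_).symm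
    rw [hzero r fun hpr => h ?_, mul_zero]
    have hpx := hpr.canBelow_canPar
    rw [canPar_canChild hK (by omega) (mem_range.1 hr)] at hpx
    exact ⟨by have := hpr.1; change p.2 ≤ x₂ - 1 at this; omega, hpx.2⟩

theorem canAdjOp_canPsi (hK : 0 < K) (hx : x.2 = l) (hl : 1 ≤ l) {E : ℂ}
    (hψ : IsSubtreeEigenvector K (0, l - 1) E ψ) (α : CanV → ℝ) (p : CanV) :
    canAdjOp K (canPsi K l x α ψ) p
      = E * canPsi K l x α ψ p
        + (∑ r ∈ range K, (α (canChild K x r) : ℂ)) * if p = x then ψ (0, l - 1) else 0 := by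
  obtain ⟨x₁, x₂⟩ := x
  subst hx
  have hτ : ∀ r ∈ range K,
      canAdjOp K (fun q => ψ ((canShift K (canChild K (x₁, x₂) r)).symm q)) p
        = E * ψ ((canShift K (canChild K (x₁, x₂) r)).symm p)
          + if p = (x₁, x₂) then ψ (0, x₂ - 1) else 0 := fun r hr => by
    have h := (hψ.comp_canShift_symm (w := canChild K (x₁, x₂) r) hK).canAdjOp_eq_add hK p
    rw [canPar_canChild hK (by omega) (mem_range.1 hr)] at h
    simp only [Function.comp_apply, canShift_symm_self] at h
    exact h
  simp only [funext (canPsi_eq_sum hK rfl hl hψ.eq_zero_of_not_canBelow (α := α)),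
    canAdjOp_sum_mul, Finset.mul_sum, Finset.sum_mul, ← Finset.sum_add_distrib]
  refine Finset.sum_congr rfl fun r hr => ?_
  rw [hτ r hr]
  ring

theorem tsum_conj_canPsi_mul_canPsi (hK : 0 < K) (hx : x.2 = l) (hl : 1 ≤ l)
    (hψ : ∀ v, ¬canBelow K v (0, l - 1) → ψ v = 0)
    (hsum : Summable fun v => starRingEnd ℂ (ψ v) * ψ v) (α β : CanV → ℝ) :
    ∑' p, starRingEnd ℂ (canPsi K l x α ψ p) * canPsi K l x β ψ p
      = (∑ r ∈ range K, ((α (canChild K x r) * β (canChild K x r) : ℝ) : ℂ))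
        * ∑' v, starRingEnd ℂ (ψ v) * ψ v := by
  obtain ⟨x₁, x₂⟩ := x
  subst hx
  have hsupp : ∀ r p, ψ ((canShift K (canChild K (x₁, x₂) r)).symm p) ≠ 0 →
      canBelow K p (canChild K (x₁, x₂) r) :=
    fun r p => not_imp_comm.1 (apply_canShift_symm_eq_zero hK hψ)
  simp only [canPsi_eq_sum hK rfl hl hψ]
  rw [tsum_conj_sum_mul_sum, Finset.sum_mul]
  · refine Finset.sum_congr rfl fun r _ => ?_
    rw [Equiv.tsum_eq (canShift K _).symm fun v => starRingEnd ℂ (ψ v) * ψ v,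
      Complex.conj_ofReal, Complex.ofReal_mul]
  · intro r _ s _ hrs
    exact Set.disjoint_left.2 fun p hpr hps =>
      hrs (canChild_injective _ ((hsupp r p hpr).eq_of_snd_eq (hsupp s p hps) rfl))
  · exact fun r _ => (Equiv.summable_iff (canShift K _).symm).2 hsum

end Psi

theorem canopy_explicit_eigenvectors_general
    (K l : ℕ) (hK : 2 < K) (hl : 2 ≤ l) (ω : CanV → ℝ)
    (x : CanV) (hx : x.2 = l) (E : ℝ) (ψ : CanV → ℂ)
    (hsupp : ∀ v ∉ canLam K (l - 1) ((0 : ℤ), l - 1), ψ v = 0)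
    (heig : ∀ v ∈ canLam K (l - 1) ((0 : ℤ), l - 1), canAdjOp K ψ v = (E : ℂ) * ψ v)
    (hnorm : ∑' v : CanV, (starRingEnd ℂ) (ψ v) * ψ v = 1) :
    (∀ α : CanV → ℝ, (∑ r ∈ Finset.range K, α ((K : ℤ) * x.1 + (r : ℤ), l - 1)) = 0 →
      ∀ p : CanV, canH K l ω (canPsi K l x α ψ) p
        = ((E + ω x : ℝ) : ℂ) * canPsi K l x α ψ p) ∧
    (∀ α β : CanV → ℝ,
      (∑ r ∈ Finset.range K, α ((K : ℤ) * x.1 + (r : ℤ), l - 1)) = 0 →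
      (∑ r ∈ Finset.range K, β ((K : ℤ) * x.1 + (r : ℤ), l - 1)) = 0 →
      ∑' p : CanV, (starRingEnd ℂ) (canPsi K l x α ψ p) * canPsi K l x β ψ p
        = ∑ r ∈ Finset.range K,
            ((α ((K : ℤ) * x.1 + (r : ℤ), l - 1) * β ((K : ℤ) * x.1 + (r : ℤ), l - 1) : ℝ) : ℂ)) := by
  obtain ⟨x₁, x₂⟩ := x
  subst hx
  have hK₀ : 0 < K := by omega
  have hl₁ : 1 ≤ x₂ := by omega
  have hψ : IsSubtreeEigenvector K (0, x₂ - 1) E ψ :=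
    ⟨fun v hv => hsupp v (mt mem_canLam_self_iff.1 hv),
      fun v hv => heig v (mem_canLam_self_iff.2 hv)⟩
  have hsum : Summable fun v => starRingEnd ℂ (ψ v) * ψ v := by
    by_contra h
    exact zero_ne_one ((tsum_eq_zero_of_not_summable h).symm.trans hnorm)
  refine ⟨fun α hα p => ?_, fun α β _ _ => ?_⟩
  · have hα' : ∑ r ∈ range K, (α (canChild K (x₁, x₂) r) : ℂ) = 0 := by
      rw [← Complex.ofReal_sum]
      exact congrArg _ hα
    rw [canH, canAdjOp_canPsi hK₀ rfl hl₁ hψ, hα', zero_mul, add_zero,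
      canPot_mul_canPsi (x := (x₁, x₂)) rfl]
    push_cast
    ring
  · rw [tsum_conj_canPsi_mul_canPsi hK₀ rfl hl₁ hψ.eq_zero_of_not_canBelow hsum, hnorm,
      mul_one]
    rfl

/-- For `x ∈ 𝒱_l`, an eigenvalue `E` of `Δ_{l-1}` with normalized
eigenvector `ψ` (on the fixed copy `Λ_{l-1}((0,l-1))` of `𝒯_{l-1}`), and any tuple
`α = (α_y)_{y ∈ N_x}` of reals with `Σ_y α_y = 0`, the vector `Ψ^{(α)}` satisfies
`H^ω_𝒯 Ψ^{(α)} = (E + ω_x) Ψ^{(α)}`; moreover for two such tuples `α, β` one has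
`⟨Ψ^{(α)}, Ψ^{(β)}⟩_{ℓ²(𝒱)} = Σ_{y ∈ N_x} α_y β_y`. -/
theorem canopy_explicit_eigenvectors
    (K l : ℕ) (hK : 2 < K) (hl : 2 ≤ l) (ω : CanV → ℝ)
    (x : CanV) (hx : x.2 = l) (E : ℝ) (ψ : CanV → ℂ)
    (hsupp : ∀ v ∉ canLam K (l - 1) ((0 : ℤ), l - 1), ψ v = 0)
    (heig : ∀ v ∈ canLam K (l - 1) ((0 : ℤ), l - 1), canAdjOp K ψ v = (E : ℂ) * ψ v)
    (hψne : ψ ≠ 0)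
    (hnorm : ∑' v : CanV, (starRingEnd ℂ) (ψ v) * ψ v = 1) :
    (∀ α : CanV → ℝ, (∑ r ∈ Finset.range K, α ((K : ℤ) * x.1 + (r : ℤ), l - 1)) = 0 →
      ∀ p : CanV, canH K l ω (canPsi K l x α ψ) p
        = ((E + ω x : ℝ) : ℂ) * canPsi K l x α ψ p) ∧
    (∀ α β : CanV → ℝ,
      (∑ r ∈ Finset.range K, α ((K : ℤ) * x.1 + (r : ℤ), l - 1)) = 0 →
      (∑ r ∈ Finset.range K, β ((K : ℤ) * x.1 + (r : ℤ), l - 1)) = 0 →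
      ∑' p : CanV, (starRingEnd ℂ) (canPsi K l x α ψ p) * canPsi K l x β ψ p
        = ∑ r ∈ Finset.range K,
            ((α ((K : ℤ) * x.1 + (r : ℤ), l - 1) * β ((K : ℤ) * x.1 + (r : ℤ), l - 1) : ℝ) : ℂ)) :=
  canopy_explicit_eigenvectors_general K l hK hl ω x hx E ψ hsupp heig hnorm
end

section
/- For any family (φ_g)_{g∈G} with each φ_g an automorphism of ℋ fixing v_{−n}, …, v_{−1}, v_1, …, v_n, the map Θ((φ_g)) : 𝒱_G → 𝒱_G defined by Θ((φ_g))((v,h)) = (φ_h(v), h) is a graph automorphism of ℋ_G, and for every ω : G → ℝ the associated unitary U_{Θ((φ_g))} satisfies U_{Θ((φ_g))} H^ω_G U_{Θ((φ_g))}* = H^ω_G. Moreover Θ is an injective group homomorphism from ∏_{g∈G} Aut(ℋ | {v_{−n},…,v_n}) into Aut(ℋ_G). -/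
open scoped Classical

/-!
Cayley-type graph setup.  Given a finite undirected graph `ℋ` on `V`, distinguished
vertices `v_i = vpos i` and `v_{-i} = vneg i` (`1 ≤ i ≤ n`), and a group `G` generated by
`g_i = gen i`, the graph `ℋ_G` on `𝒱_G = V × G` has the fibre edges `{(v,g),(w,g)}` for
`{v,w} ∈ ℰ` and the cross edges `{(v_{-i},g),(v_i, g·gᵢ)}`.
-/

/-- The base relation generating the edges of `ℋ_G`. -/
def cayRel {V G : Type*} [Group G] (H : SimpleGraph V) {n : ℕ}
    (vpos vneg : Fin n → V) (gen : Fin n → G) (p q : V × G) : Prop :=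
  (p.2 = q.2 ∧ H.Adj p.1 q.1) ∨ ∃ i : Fin n, p.1 = vneg i ∧ q.1 = vpos i ∧ q.2 = p.2 * gen i

/-- The Cayley-type graph `ℋ_G` on `V × G`. -/
def cayGraph {V G : Type*} [Group G] (H : SimpleGraph V) {n : ℕ}
    (vpos vneg : Fin n → V) (gen : Fin n → G) : SimpleGraph (V × G) :=
  SimpleGraph.fromRel (cayRel H vpos vneg gen)

/-- The adjacency operator `Δ_{ℋ_G}` of `ℋ_G`: `(Δ u)(p) = Σ_{q adjacent to p} u(q)`. -/
noncomputable def cayAdjOp {V G : Type*} [Group G] (H : SimpleGraph V) {n : ℕ}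
    (vpos vneg : Fin n → V) (gen : Fin n → G) (u : V × G → ℂ) (p : V × G) : ℂ :=
  ∑' q : V × G, if (cayGraph H vpos vneg gen).Adj p q then u q else 0

/-- The Anderson-type operator `H^ω_G = Δ_{ℋ_G} + Σ_{g∈G} ω_g P_g`, where `P_g` is the
coordinate projection onto `V × {g}`. -/
noncomputable def cayH {V G : Type*} [Group G] (H : SimpleGraph V) {n : ℕ}
    (vpos vneg : Fin n → V) (gen : Fin n → G) (ω : G → ℝ) (u : V × G → ℂ) (p : V × G) : ℂ :=
  cayAdjOp H vpos vneg gen u p + (ω p.2 : ℂ) * u p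

/-- The map `Θ((φ_g)) : (v,h) ↦ (φ_h(v), h)` on `𝒱_G = V × G`. -/
def thetaMap {V G : Type*} (Φ : G → (V ≃ V)) (p : V × G) : V × G := (Φ p.2 p.1, p.2)

/-- The inverse of `Θ((φ_g))`, i.e. `Θ((φ_g⁻¹))`. -/
def thetaInv {V G : Type*} (Φ : G → (V ≃ V)) (p : V × G) : V × G := ((Φ p.2).symm p.1, p.2)

/-!
`Θ((φ_g))` acts fibrewise, so it preserves the fibre edges because each `φ_h` is an
automorphism of `ℋ`, and it preserves the cross edges because these only join the
distinguished vertices, which every `φ_h` fixes. Conjugating by `U_Θ` reindexes the sum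
defining the adjacency operator along an automorphism, which leaves it unchanged, and the
potential `ω` only sees the group coordinate, which `Θ` does not move.
-/

theorem SimpleGraph.Iso.tsum_adj_symm_apply {W M : Type*} [AddCommMonoid M] [TopologicalSpace M]
    {Γ : SimpleGraph W} (e : Γ ≃g Γ) (u : W → M) (p : W) :
    (∑' q, if Γ.Adj (e p) q then u (e.symm q) else 0) = ∑' q, if Γ.Adj p q then u q else 0 := by
  rw [← e.toEquiv.tsum_eq]
  simp only [RelIso.coe_fn_toEquiv, RelIso.symm_apply_apply, SimpleGraph.Iso.map_adj_iff]

section Theta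

variable {V G : Type*}

@[simps]
def thetaEquiv (Φ : G → V ≃ V) : V × G ≃ V × G where
  toFun := thetaMap Φ
  invFun := thetaInv Φ
  left_inv p := by simp [thetaMap, thetaInv]
  right_inv p := by simp [thetaMap, thetaInv]

theorem thetaMap_bijective (Φ : G → V ≃ V) : Function.Bijective (thetaMap Φ) :=
  (thetaEquiv Φ).bijective

theorem thetaMap_trans (Φ Φ' : G → V ≃ V) (p : V × G) :
    thetaMap (fun g => (Φ' g).trans (Φ g)) p = thetaMap Φ (thetaMap Φ' p) :=
  rfl

theorem thetaMap_injective : Function.Injective (thetaMap : (G → V ≃ V) → V × G → V × G) := by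
  intro Φ Φ' h
  ext g v
  exact congrArg Prod.fst (congrFun h (v, g))

variable [Group G] (H : SimpleGraph V) {n : ℕ} (vpos vneg : Fin n → V) (gen : Fin n → G)
  {Φ : G → V ≃ V}

theorem cayRel_thetaMap_iff (hadj : ∀ g a b, H.Adj a b ↔ H.Adj (Φ g a) (Φ g b))
    (hfix : ∀ g i, Φ g (vpos i) = vpos i ∧ Φ g (vneg i) = vneg i) (p q : V × G) :
    cayRel H vpos vneg gen (thetaMap Φ p) (thetaMap Φ q) ↔ cayRel H vpos vneg gen p q := by
  obtain ⟨a, g⟩ := p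
  obtain ⟨b, h⟩ := q
  simp only [cayRel, thetaMap]
  constructor
  · rintro (⟨rfl, hab⟩ | ⟨i, ha, hb, hgh⟩)
    · exact Or.inl ⟨rfl, (hadj g a b).2 hab⟩
    · exact Or.inr ⟨i, (Φ g).injective (ha.trans (hfix g i).2.symm),
        (Φ h).injective (hb.trans (hfix h i).1.symm), hgh⟩
  · rintro (⟨rfl, hab⟩ | ⟨i, rfl, rfl, hgh⟩)
    · exact Or.inl ⟨rfl, (hadj g a b).1 hab⟩
    · exact Or.inr ⟨i, (hfix g i).2, (hfix h i).1, hgh⟩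

def thetaAut (hadj : ∀ g a b, H.Adj a b ↔ H.Adj (Φ g a) (Φ g b))
    (hfix : ∀ g i, Φ g (vpos i) = vpos i ∧ Φ g (vneg i) = vneg i) :
    cayGraph H vpos vneg gen ≃g cayGraph H vpos vneg gen where
  toEquiv := thetaEquiv Φ
  map_rel_iff' {p q} := by
    simp only [cayGraph, SimpleGraph.fromRel_adj, thetaEquiv_apply,
      (thetaMap_bijective Φ).injective.ne_iff, cayRel_thetaMap_iff H vpos vneg gen hadj hfix]

theorem cayH_thetaMap (hadj : ∀ g a b, H.Adj a b ↔ H.Adj (Φ g a) (Φ g b))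
    (hfix : ∀ g i, Φ g (vpos i) = vpos i ∧ Φ g (vneg i) = vneg i)
    (ω : G → ℝ) (u : V × G → ℂ) (p : V × G) :
    cayH H vpos vneg gen ω (fun q => u (thetaInv Φ q)) (thetaMap Φ p) =
      cayH H vpos vneg gen ω u p := by
  have hinv : thetaInv Φ (thetaMap Φ p) = p := (thetaEquiv Φ).left_inv p
  simp only [cayH, cayAdjOp, hinv]
  congr 1
  exact (thetaAut H vpos vneg gen hadj hfix).tsum_adj_symm_apply u p

end Theta

theorem cayley_theta_automorphism_general {V G : Type*} [Group G]
    (H : SimpleGraph V) {n : ℕ} (vpos vneg : Fin n → V) (gen : Fin n → G) :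
    (∀ Φ : G → (V ≃ V),
      (∀ g a b, H.Adj a b ↔ H.Adj (Φ g a) (Φ g b)) →
      (∀ g i, Φ g (vpos i) = vpos i ∧ Φ g (vneg i) = vneg i) →
      Function.Bijective (thetaMap Φ) ∧
      (∀ p q, (cayGraph H vpos vneg gen).Adj p q ↔
        (cayGraph H vpos vneg gen).Adj (thetaMap Φ p) (thetaMap Φ q)) ∧
      (∀ (ω : G → ℝ) (u : V × G → ℂ) (p : V × G),
        cayH H vpos vneg gen ω (fun q => u (thetaInv Φ q)) (thetaMap Φ p)
          = cayH H vpos vneg gen ω u p)) ∧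
    (∀ Φ Φ' : G → (V ≃ V),
      (∀ g a b, H.Adj a b ↔ H.Adj (Φ g a) (Φ g b)) →
      (∀ g i, Φ g (vpos i) = vpos i ∧ Φ g (vneg i) = vneg i) →
      (∀ g a b, H.Adj a b ↔ H.Adj (Φ' g a) (Φ' g b)) →
      (∀ g i, Φ' g (vpos i) = vpos i ∧ Φ' g (vneg i) = vneg i) →
      (∀ p, thetaMap (fun g => (Φ' g).trans (Φ g)) p = thetaMap Φ (thetaMap Φ' p)) ∧
      (thetaMap Φ = thetaMap Φ' → Φ = Φ')) :=
  ⟨fun _ hadj hfix =>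
    ⟨thetaMap_bijective _,
      fun _ _ => ((thetaAut H vpos vneg gen hadj hfix).map_adj_iff).symm,
      cayH_thetaMap H vpos vneg gen hadj hfix⟩,
    fun Φ Φ' _ _ _ _ => ⟨thetaMap_trans Φ Φ', fun h => thetaMap_injective h⟩⟩

/-- For any family `(φ_g)_{g∈G}` of automorphisms of `ℋ` fixing the
distinguished vertices `v_{-n},…,v_{-1},v_1,…,v_n`, the map
`Θ((φ_g))((v,h)) = (φ_h(v),h)` is a graph automorphism of `ℋ_G`, and the associated
unitary `U_{Θ((φ_g))}` satisfies `U_Θ H^ω_G U_Θ* = H^ω_G` for every `ω : G → ℝ`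
(evaluated on an arbitrary `u` at an arbitrary point, using `U_Θ* = U_{Θ⁻¹}`).
Moreover `Θ` is an injective group homomorphism from
`∏_{g∈G} Aut(ℋ | {v_{-n},…,v_n})` into `Aut(ℋ_G)` (multiplication being composition). -/
theorem cayley_theta_automorphism {V G : Type*} [Group G] [Fintype V]
    (H : SimpleGraph V) {n : ℕ} (vpos vneg : Fin n → V) (gen : Fin n → G)
    (hgen : Subgroup.closure (Set.range gen) = ⊤) :
    (∀ Φ : G → (V ≃ V),
      (∀ g a b, H.Adj a b ↔ H.Adj (Φ g a) (Φ g b)) →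
      (∀ g i, Φ g (vpos i) = vpos i ∧ Φ g (vneg i) = vneg i) →
      Function.Bijective (thetaMap Φ) ∧
      (∀ p q, (cayGraph H vpos vneg gen).Adj p q ↔
        (cayGraph H vpos vneg gen).Adj (thetaMap Φ p) (thetaMap Φ q)) ∧
      (∀ (ω : G → ℝ) (u : V × G → ℂ) (p : V × G),
        cayH H vpos vneg gen ω (fun q => u (thetaInv Φ q)) (thetaMap Φ p)
          = cayH H vpos vneg gen ω u p)) ∧
    (∀ Φ Φ' : G → (V ≃ V),
      (∀ g a b, H.Adj a b ↔ H.Adj (Φ g a) (Φ g b)) →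
      (∀ g i, Φ g (vpos i) = vpos i ∧ Φ g (vneg i) = vneg i) →
      (∀ g a b, H.Adj a b ↔ H.Adj (Φ' g a) (Φ' g b)) →
      (∀ g i, Φ' g (vpos i) = vpos i ∧ Φ' g (vneg i) = vneg i) →
      (∀ p, thetaMap (fun g => (Φ' g).trans (Φ g)) p = thetaMap Φ (thetaMap Φ' p)) ∧
      (thetaMap Φ = thetaMap Φ' → Φ = Φ')) :=
  cayley_theta_automorphism_general H vpos vneg gen
end

section
/- Suppose E₀ is an eigenvalue of the adjacency matrix Δ_ℋ of the finite graph ℋ admitting orthonormal eigenvectors ψ_1, …, ψ_l (l ≥ 2) that all vanish at vertices x_1, …, x_m ∈ 𝒱, and suppose the distinguished vertices of the construction satisfy v_i = x_{π(i)} for some map π : {−n,…,n} → {1,…,m}. Then for every ω : G → ℝ and every g ∈ G, the vectors Ψ^{g,i} ∈ ℓ²(𝒱_G) defined by Ψ^{g,i}((v,h)) = ψ_i(v) if h = g and 0 otherwise (1 ≤ i ≤ l) are orthonormal eigenvectors of H^ω_G with eigenvalue E₀ + ω_g; in particular E₀ + ω_g is an eigenvalue of H^ω_G of multiplicity at least l.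 -/
open scoped Classical

/-- The adjacency matrix `Δ_ℋ` of the finite graph `ℋ`, acting on functions `V → ℂ`. -/
noncomputable def adjOpC {V : Type*} [Fintype V] (H : SimpleGraph V) (u : V → ℂ) (v : V) : ℂ :=
  ∑ w : V, if H.Adj v w then u w else 0

/-- The vector `Ψ^{g,i}` supported in the fibre `V × {g}`:
`Ψ^{g,i}((v,h)) = ψ_i(v)` if `h = g` and `0` otherwise. -/
noncomputable def fibVec {V G : Type*} (ψ : V → ℂ) (g : G) (p : V × G) : ℂ :=
  if p.2 = g then ψ p.1 else 0

section FibreVectors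

variable {V G : Type*}

@[simp]
lemma fibVec_of_ne {ψ : V → ℂ} {g : G} {p : V × G} (hp : p.2 ≠ g) : fibVec ψ g p = 0 :=
  if_neg hp

lemma tsum_eq_sum_fibre {M : Type*} [AddCommMonoid M] [TopologicalSpace M] [Fintype V]
    (g : G) {f : V × G → M} (hf : ∀ p : V × G, p.2 ≠ g → f p = 0) :
    ∑' p, f p = ∑ v, f (v, g) := by
  rw [← (Prod.mk_left_injective g).tsum_eq, tsum_fintype]
  intro p hp
  exact ⟨p.1, Prod.ext rfl (not_imp_comm.1 (hf p) hp).symm⟩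

lemma memℓp_fibVec [Finite V] (ψ : V → ℂ) (g : G) (q : ENNReal) : Memℓp (fibVec ψ g) q := by
  refine (memℓp_zero ((Set.finite_range fun v : V => (v, g)).subset ?_)).of_exponent_ge bot_le
  intro p hp
  exact ⟨p.1, Prod.ext rfl (not_imp_comm.1 fibVec_of_ne hp).symm⟩

lemma tsum_conj_fibVec_mul_fibVec [Fintype V] (φ χ : V → ℂ) (g : G) :
    ∑' p : V × G, starRingEnd ℂ (fibVec φ g p) * fibVec χ g p
      = ∑ v, starRingEnd ℂ (φ v) * χ v := by
  rw [tsum_eq_sum_fibre g fun p hp => by simp [fibVec_of_ne hp]]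
  simp [fibVec]

end FibreVectors

section CayleyGraph

variable {V G : Type*} [Group G] {H : SimpleGraph V} {n : ℕ} {vpos vneg : Fin n → V}
  {gen : Fin n → G}

lemma cayGraph_adj_mk_iff {p : V × G} {w : V} {h : G} (hwpos : w ∉ Set.range vpos)
    (hwneg : w ∉ Set.range vneg) :
    (cayGraph H vpos vneg gen).Adj p (w, h) ↔ p.2 = h ∧ H.Adj p.1 w := by
  rw [cayGraph, SimpleGraph.fromRel_adj, cayRel, cayRel]
  constructor
  · rintro ⟨-, (⟨hfib, hadj⟩ | ⟨k, -, hk, -⟩) | (⟨hfib, hadj⟩ | ⟨k, hk, -⟩)⟩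
    · exact ⟨hfib, hadj⟩
    · exact absurd ⟨k, hk.symm⟩ hwpos
    · exact ⟨hfib.symm, hadj.symm⟩
    · exact absurd ⟨k, hk.symm⟩ hwneg
  · rintro ⟨rfl, hadj⟩
    exact ⟨fun he => hadj.ne (congrArg Prod.fst he), Or.inl (Or.inl ⟨rfl, hadj⟩)⟩

/-- Vanishing at the distinguished vertices, `φ` never sees the cross edges. -/
lemma cayAdjOp_fibVec [Fintype V] {φ : V → ℂ} (hpos : ∀ k, φ (vpos k) = 0)
    (hneg : ∀ k, φ (vneg k) = 0) (g : G) :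
    cayAdjOp H vpos vneg gen (fibVec φ g) = fibVec (adjOpC H φ) g := by
  funext p
  rw [cayAdjOp, tsum_eq_sum_fibre g fun q hq => by simp [fibVec_of_ne hq]]
  have hterm : ∀ w, (if (cayGraph H vpos vneg gen).Adj p (w, g) then fibVec φ g (w, g) else 0)
      = if p.2 = g ∧ H.Adj p.1 w then φ w else 0 := by
    intro w
    by_cases hw : φ w = 0
    · simp [fibVec, hw]
    · have hwpos : w ∉ Set.range vpos := by rintro ⟨k, rfl⟩; exact hw (hpos k)
      have hwneg : w ∉ Set.range vneg := by rintro ⟨k, rfl⟩; exact hw (hneg k)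
      simp only [cayGraph_adj_mk_iff hwpos hwneg, fibVec, if_true]
  simp only [hterm]
  by_cases hp : p.2 = g <;> simp [fibVec, adjOpC, hp]

lemma cayH_fibVec_eq_mul [Fintype V] (ω : G → ℝ) {φ : V → ℂ} {E : ℝ}
    (heig : ∀ v, adjOpC H φ v = E * φ v) (hpos : ∀ k, φ (vpos k) = 0)
    (hneg : ∀ k, φ (vneg k) = 0) (g : G) (p : V × G) :
    cayH H vpos vneg gen ω (fibVec φ g) p = ((E + ω g : ℝ) : ℂ) * fibVec φ g p := by
  rw [cayH, cayAdjOp_fibVec hpos hneg]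
  by_cases hp : p.2 = g
  · simp only [fibVec, hp, if_true, heig]
    push_cast
    ring
  · simp [hp]

end CayleyGraph

theorem cayley_fiber_eigenvectors_general {V G : Type*} [Group G] [Fintype V]
    (H : SimpleGraph V) {n : ℕ} (vpos vneg : Fin n → V) (gen : Fin n → G)
    {l m : ℕ}
    (E₀ : ℝ) (ψ : Fin l → V → ℂ)
    (heig : ∀ i v, adjOpC H (ψ i) v = (E₀ : ℂ) * ψ i v)
    (horth : ∀ i j, ∑ v : V, (starRingEnd ℂ) (ψ i v) * ψ j v = if i = j then 1 else 0)
    (x : Fin m → V)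
    (hvan : ∀ i j, ψ i (x j) = 0)
    (hpos : ∀ i : Fin n, ∃ j : Fin m, vpos i = x j)
    (hneg : ∀ i : Fin n, ∃ j : Fin m, vneg i = x j)
    (ω : G → ℝ) (g : G) :
    (∀ i, Memℓp (fibVec (ψ i) g) 2) ∧
    (∀ i p, cayH H vpos vneg gen ω (fibVec (ψ i) g) p
      = ((E₀ + ω g : ℝ) : ℂ) * fibVec (ψ i) g p) ∧
    (∀ i j, ∑' p : V × G, (starRingEnd ℂ) (fibVec (ψ i) g p) * fibVec (ψ j) g p
      = if i = j then 1 else 0) := by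
  have hψpos : ∀ i k, ψ i (vpos k) = 0 := fun i k => by
    obtain ⟨j, hj⟩ := hpos k
    rw [hj, hvan]
  have hψneg : ∀ i k, ψ i (vneg k) = 0 := fun i k => by
    obtain ⟨j, hj⟩ := hneg k
    rw [hj, hvan]
  refine ⟨fun i => memℓp_fibVec (ψ i) g 2, fun i => ?_, fun i j => ?_⟩
  · exact cayH_fibVec_eq_mul ω (heig i) (hψpos i) (hψneg i) g
  · rw [tsum_conj_fibVec_mul_fibVec, horth]

/-- Suppose `E₀` is an eigenvalue of `Δ_ℋ` admitting orthonormal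
eigenvectors `ψ_1,…,ψ_l` (`l ≥ 2`) all vanishing at `x_1,…,x_m ∈ V`, and the distinguished
vertices satisfy `v_i = x_{π(i)}`.  Then for every `ω : G → ℝ` and `g ∈ G`, the vectors
`Ψ^{g,i}` are orthonormal `ℓ²`-eigenvectors of `H^ω_G` with eigenvalue `E₀ + ω_g`; in
particular `E₀ + ω_g` is an eigenvalue of `H^ω_G` of multiplicity at least `l`. -/
theorem cayley_fiber_eigenvectors {V G : Type*} [Group G] [Fintype V]
    (H : SimpleGraph V) {n : ℕ} (vpos vneg : Fin n → V) (gen : Fin n → G)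
    (hgen : Subgroup.closure (Set.range gen) = ⊤)
    {l m : ℕ} (hl : 2 ≤ l)
    (E₀ : ℝ) (ψ : Fin l → V → ℂ)
    (heig : ∀ i v, adjOpC H (ψ i) v = (E₀ : ℂ) * ψ i v)
    (horth : ∀ i j, ∑ v : V, (starRingEnd ℂ) (ψ i v) * ψ j v = if i = j then 1 else 0)
    (x : Fin m → V)
    (hvan : ∀ i j, ψ i (x j) = 0)
    (hpos : ∀ i : Fin n, ∃ j : Fin m, vpos i = x j)
    (hneg : ∀ i : Fin n, ∃ j : Fin m, vneg i = x j)
    (ω : G → ℝ) (g : G) :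
    (∀ i, Memℓp (fibVec (ψ i) g) 2) ∧
    (∀ i p, cayH H vpos vneg gen ω (fibVec (ψ i) g) p
      = ((E₀ + ω g : ℝ) : ℂ) * fibVec (ψ i) g p) ∧
    (∀ i j, ∑' p : V × G, (starRingEnd ℂ) (fibVec (ψ i) g p) * fibVec (ψ j) g p
      = if i = j then 1 else 0) :=
  cayley_fiber_eigenvectors_general H vpos vneg gen E₀ ψ heig horth x hvan hpos hneg ω g
end

section
/- Let H̃_i = (Ṽ_i, Ẽ_i), 1 ≤ i ≤ l+m, be pairwise disjoint finite undirected graphs, let E₀ be a common eigenvalue of all the adjacency matrices Δ_{H̃_i} with chosen eigenvectors ψ_i, and let v_{i,1}, …, v_{i,m} ∈ Ṽ_i for each i (repetitions allowed). Form the graph ℋ with vertex set {x_1,…,x_m} ∪ (∪_i Ṽ_i) (the x_j new vertices) and edge set ∪_i (Ẽ_i ∪ {{x_j, v_{i,j}} : 1 ≤ j ≤ m}). Then the space of tuples α = (α_1,…,α_{l+m}) ∈ ℝ^{l+m} satisfying Σ_{i=1}^{l+m} α_i ψ_i(v_{i,j}) = 0 for all 1 ≤ j ≤ m has dimension at least l,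 and for each such α the vector Ψ^{(α)} defined by Ψ^{(α)}(w) = α_i ψ_i(w) for w ∈ Ṽ_i and Ψ^{(α)}(x_j) = 0 is an eigenvector of the adjacency matrix Δ_ℋ with eigenvalue E₀ vanishing at x_1,…,x_m. Consequently E₀ is an eigenvalue of Δ_ℋ of multiplicity at least l admitting l orthonormal eigenvectors that vanish at x_1, …, x_m. -/
/-! On each `Ṽ_i` the vector `Ψ^{(α)}` is the `E₀`-eigenvector `α_i ψ_i` of `H̃_i`, and it vanishes
at the new vertices, so the new edges contribute nothing to `Δ_ℋ Ψ^{(α)}` on `Ṽ_i`; at `x_j` the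
value of `Δ_ℋ Ψ^{(α)}` is `Σ_i α_i ψ_i(v_{i,j})`, which the constraints make `0`. The constraints
cut out the kernel of an `m × (l+m)` matrix, of dimension at least `l`, and `α ↦ Ψ^{(α)}` is
injective because no `ψ_i` vanishes, so an orthonormal basis of its image gives the `l`
orthonormal eigenvectors. -/

open scoped Classical

/-- The adjacency matrix of a finite graph, acting on real-valued functions on the vertex
set by `(Δ u)(v) = Σ_{w adjacent to v} u(w)`. -/
noncomputable def adjOpR {V : Type*} [Fintype V] (H : SimpleGraph V) (u : V → ℝ) (v : V) : ℝ :=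
  ∑ w : V, if H.Adj v w then u w else 0

/-- The glued graph `ℋ`: vertex set `{x_1,…,x_m} ∪ (∪_i Ṽ_i)` (with the pairwise disjoint
graphs `H̃_i` on `Ṽ_i = W i` and new vertices `x_j = inl j`), and edge set
`∪_i (Ẽ_i ∪ {{x_j, v_{i,j}} : 1 ≤ j ≤ m})`. -/
def glueGraph {l m : ℕ} (W : Fin (l + m) → Type*) (Hs : ∀ i, SimpleGraph (W i))
    (vsel : ∀ i, Fin m → W i) : SimpleGraph (Fin m ⊕ Σ i, W i) :=
  SimpleGraph.fromRel (fun a b =>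
    (∃ (i : Fin (l + m)) (v w : W i),
        a = Sum.inr ⟨i, v⟩ ∧ b = Sum.inr ⟨i, w⟩ ∧ (Hs i).Adj v w) ∨
    (∃ (i : Fin (l + m)) (j : Fin m), a = Sum.inl j ∧ b = Sum.inr ⟨i, vsel i j⟩))

open Module

lemma adjOpR_const_mul {V : Type*} [Fintype V] (H : SimpleGraph V) (c : ℝ) (u : V → ℝ) (v : V) :
    adjOpR H (fun w => c * u w) v = c * adjOpR H u v := by
  simp only [adjOpR, Finset.mul_sum, mul_ite, mul_zero]

lemma Matrix.card_sub_card_le_finrank_ker {K p n : Type*} [Field K] [Fintype p] [Fintype n]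
    (M : Matrix p n K) :
    Fintype.card n - Fintype.card p ≤ finrank K (LinearMap.ker M.mulVecLin) := by
  have := LinearMap.finrank_range_add_finrank_ker M.mulVecLin
  have := M.rank_le_card_height
  simp only [Matrix.rank, finrank_fintype_fun_eq_card] at *
  omega

lemma exists_orthonormal_mem_of_le_finrank {V : Type*} [Fintype V] {l : ℕ}
    {S : Submodule ℝ (V → ℝ)} (hS : l ≤ finrank ℝ S) :
    ∃ Φ : Fin l → V → ℝ,
      (∀ a b, ∑ w, Φ a w * Φ b w = if a = b then 1 else 0) ∧ ∀ a, Φ a ∈ S := by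
  let S' := S.map ((WithLp.linearEquiv 2 ℝ (V → ℝ)).symm : (V → ℝ) →ₗ[ℝ] EuclideanSpace ℝ V)
  have hS' : l ≤ finrank ℝ S' := by rwa [LinearEquiv.finrank_map_eq]
  let b := stdOrthonormalBasis ℝ S'
  have hb := orthonormal_iff_ite.mp (b.orthonormal.comp _ (Fin.castLE_injective hS'))
  refine ⟨fun a => (b (Fin.castLE hS' a) : EuclideanSpace ℝ V).ofLp, fun a c => ?_, fun a => ?_⟩
  · simpa [Submodule.coe_inner, PiLp.inner_apply, eq_comm] using hb c a
  · exact (Submodule.mem_map_equiv S).mp (b _).2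

section glueGraph

variable {l m : ℕ} {W : Fin (l + m) → Type*} {Hs : ∀ i, SimpleGraph (W i)}
  {vsel : ∀ i, Fin m → W i}

lemma glueGraph_adj_inr_inr_iff {s t : Σ i, W i} :
    (glueGraph W Hs vsel).Adj (Sum.inr s) (Sum.inr t) ↔
      ∃ (i : Fin (l + m)) (v w : W i), s = ⟨i, v⟩ ∧ t = ⟨i, w⟩ ∧ (Hs i).Adj v w := by
  simp only [glueGraph, SimpleGraph.fromRel_adj, ne_eq, Sum.inr.injEq, reduceCtorEq, false_and,
    exists_false, or_false]
  constructor
  · rintro ⟨-, h | ⟨i, v, w, rfl, rfl, h⟩⟩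
    · exact h
    · exact ⟨i, w, v, rfl, rfl, h.symm⟩
  · rintro ⟨i, v, w, rfl, rfl, h⟩
    exact ⟨fun e => h.ne (eq_of_heq (Sigma.mk.inj e).2), .inl ⟨i, v, w, rfl, rfl, h⟩⟩

lemma glueGraph_adj_inr_inr_same {i : Fin (l + m)} (v v' : W i) :
    (glueGraph W Hs vsel).Adj (Sum.inr ⟨i, v⟩) (Sum.inr ⟨i, v'⟩) ↔ (Hs i).Adj v v' := by
  rw [glueGraph_adj_inr_inr_iff]
  constructor
  · rintro ⟨_, _, _, h1, h2, h⟩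
    cases h1; cases h2; exact h
  · exact fun h => ⟨i, v, v', rfl, rfl, h⟩

lemma glueGraph_not_adj_inr_inr {i i' : Fin (l + m)} (h : i ≠ i') (v : W i) (v' : W i') :
    ¬ (glueGraph W Hs vsel).Adj (Sum.inr ⟨i, v⟩) (Sum.inr ⟨i', v'⟩) := by
  rw [glueGraph_adj_inr_inr_iff]
  rintro ⟨_, _, _, h1, h2, -⟩
  cases h1; cases h2; exact h rfl

lemma glueGraph_not_adj_inl_inl (j j' : Fin m) :
    ¬ (glueGraph W Hs vsel).Adj (Sum.inl j) (Sum.inl j') := by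
  simp [glueGraph]

lemma glueGraph_adj_inl_inr (j : Fin m) (i : Fin (l + m)) (v : W i) :
    (glueGraph W Hs vsel).Adj (Sum.inl j) (Sum.inr ⟨i, v⟩) ↔ v = vsel i j := by
  simp [glueGraph]

lemma glueGraph_adj_inr_inl (j : Fin m) (i : Fin (l + m)) (v : W i) :
    (glueGraph W Hs vsel).Adj (Sum.inr ⟨i, v⟩) (Sum.inl j) ↔ v = vsel i j := by
  rw [SimpleGraph.adj_comm, glueGraph_adj_inl_inr]

variable (W) in
/-- `α ↦ Ψ^{(α)}`. -/
noncomputable def glueVec (ψ : ∀ i, W i → ℝ) :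
    (Fin (l + m) → ℝ) →ₗ[ℝ] Fin m ⊕ (Σ i, W i) → ℝ where
  toFun α := Sum.elim (fun _ => 0) (fun s => α s.1 * ψ s.1 s.2)
  map_add' α β := by ext (j | s) <;> simp [add_mul]
  map_smul' c α := by ext (j | s) <;> simp [mul_assoc]

lemma glueVec_injective {ψ : ∀ i, W i → ℝ} (hψ : ∀ i, ψ i ≠ 0) :
    Function.Injective (glueVec W ψ) := by
  intro α β h
  funext i
  obtain ⟨v, hv⟩ := Function.ne_iff.mp (hψ i)
  exact mul_right_cancel₀ hv (congrFun h (Sum.inr ⟨i, v⟩))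

lemma mem_ker_iff_sum_eq_zero {ψ : ∀ i, W i → ℝ} {α : Fin (l + m) → ℝ} :
    α ∈ LinearMap.ker (Matrix.of fun j i => ψ i (vsel i j)).mulVecLin ↔
      ∀ j, ∑ i, α i * ψ i (vsel i j) = 0 := by
  simp [funext_iff, Matrix.mulVec, dotProduct, mul_comm]

variable [∀ i, Fintype (W i)]

lemma adjOpR_glueGraph_inl (u : Fin m ⊕ (Σ i, W i) → ℝ) (j : Fin m) :
    adjOpR (glueGraph W Hs vsel) u (Sum.inl j) = ∑ i, u (Sum.inr ⟨i, vsel i j⟩) := by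
  simp only [adjOpR, Fintype.sum_sum_type, glueGraph_not_adj_inl_inl, if_false,
    Finset.sum_const_zero, zero_add, Fintype.sum_sigma, glueGraph_adj_inl_inr,
    Finset.sum_ite_eq', Finset.mem_univ, if_true]

lemma adjOpR_glueGraph_inr (u : Fin m ⊕ (Σ i, W i) → ℝ) (i : Fin (l + m)) (v : W i) :
    adjOpR (glueGraph W Hs vsel) u (Sum.inr ⟨i, v⟩) =
      (∑ j, if v = vsel i j then u (Sum.inl j) else 0) +
        adjOpR (Hs i) (fun w => u (Sum.inr ⟨i, w⟩)) v := by
  rw [adjOpR, Fintype.sum_sum_type, Fintype.sum_sigma, Finset.sum_eq_single i]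
  · simp only [adjOpR, glueGraph_adj_inr_inr_same, glueGraph_adj_inr_inl]
  · intro i' _ hi'
    exact Finset.sum_eq_zero fun v' _ => if_neg (glueGraph_not_adj_inr_inr hi'.symm v v')
  · exact fun h => absurd (Finset.mem_univ i) h

lemma adjOpR_glueGraph_eq_smul {E₀ : ℝ} {u : Fin m ⊕ (Σ i, W i) → ℝ}
    (hinl : ∀ j, u (Sum.inl j) = 0)
    (hcomp : ∀ i v, adjOpR (Hs i) (fun w => u (Sum.inr ⟨i, w⟩)) v = E₀ * u (Sum.inr ⟨i, v⟩))
    (hsum : ∀ j, ∑ i, u (Sum.inr ⟨i, vsel i j⟩) = 0) (w : Fin m ⊕ Σ i, W i) :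
    adjOpR (glueGraph W Hs vsel) u w = E₀ * u w := by
  rcases w with j | ⟨i, v⟩
  · rw [adjOpR_glueGraph_inl, hsum, hinl, mul_zero]
  · simp only [adjOpR_glueGraph_inr, hinl, ite_self, Finset.sum_const_zero, zero_add, hcomp]

lemma adjOpR_glueGraph_glueVec {E₀ : ℝ} {ψ : ∀ i, W i → ℝ}
    (heig : ∀ i v, adjOpR (Hs i) (ψ i) v = E₀ * ψ i v) {α : Fin (l + m) → ℝ}
    (hα : ∀ j, ∑ i, α i * ψ i (vsel i j) = 0) (w : Fin m ⊕ Σ i, W i) :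
    adjOpR (glueGraph W Hs vsel) (glueVec W ψ α) w = E₀ * glueVec W ψ α w := by
  refine adjOpR_glueGraph_eq_smul (fun _ => rfl) (fun i v => ?_) hα w
  simp only [glueVec, LinearMap.coe_mk, AddHom.coe_mk, Sum.elim_inr, adjOpR_const_mul, heig]
  ring

end glueGraph

/-- Let `H̃_i`, `1 ≤ i ≤ l+m`, be pairwise disjoint finite graphs with a
common adjacency eigenvalue `E₀` and chosen eigenvectors `ψ_i`, and let
`v_{i,1},…,v_{i,m} ∈ Ṽ_i`.  Form the glued graph `ℋ` above.  Then the space of tuples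
`α ∈ ℝ^{l+m}` with `Σ_i α_i ψ_i(v_{i,j}) = 0` for all `j` has dimension at least `l`; for
each such `α` the vector `Ψ^{(α)}` (equal to `α_i ψ_i` on `Ṽ_i` and `0` at the `x_j`) is an
eigenvector of `Δ_ℋ` with eigenvalue `E₀` vanishing at `x_1,…,x_m`; consequently `E₀` is an
eigenvalue of `Δ_ℋ` of multiplicity at least `l`, admitting `l` orthonormal eigenvectors
vanishing at `x_1,…,x_m`. -/
theorem glueGraph_eigenvalue_multiplicity
    {l m : ℕ} (W : Fin (l + m) → Type*) [∀ i, Fintype (W i)]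
    (Hs : ∀ i, SimpleGraph (W i)) (E₀ : ℝ) (ψ : ∀ i, W i → ℝ)
    (hψne : ∀ i, ψ i ≠ 0)
    (heig : ∀ i v, adjOpR (Hs i) (ψ i) v = E₀ * ψ i v)
    (vsel : ∀ i, Fin m → W i) :
    (l ≤ Module.finrank ℝ
      (LinearMap.ker (Matrix.mulVecLin
        (Matrix.of fun (j : Fin m) (i : Fin (l + m)) => ψ i (vsel i j))))) ∧
    (∀ α : Fin (l + m) → ℝ,
      (∀ j : Fin m, ∑ i : Fin (l + m), α i * ψ i (vsel i j) = 0) →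
      ∀ w : Fin m ⊕ Σ i, W i,
        adjOpR (glueGraph W Hs vsel)
            (Sum.elim (fun _ => 0) (fun s => α s.1 * ψ s.1 s.2)) w
          = E₀ * Sum.elim (fun _ => 0) (fun s => α s.1 * ψ s.1 s.2) w) ∧
    (∃ Φ : Fin l → (Fin m ⊕ Σ i, W i) → ℝ,
      (∀ a b, ∑ w : Fin m ⊕ Σ i, W i, Φ a w * Φ b w = if a = b then 1 else 0) ∧
      (∀ a w, adjOpR (glueGraph W Hs vsel) (Φ a) w = E₀ * Φ a w) ∧
      (∀ a j, Φ a (Sum.inl j) = 0)) := by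
  set K := LinearMap.ker (Matrix.of fun (j : Fin m) (i : Fin (l + m)) => ψ i (vsel i j)).mulVecLin
  have hK : l ≤ finrank ℝ K := by
    simpa using Matrix.card_sub_card_le_finrank_ker (Matrix.of fun j i => ψ i (vsel i j))
  refine ⟨hK, fun α hα => adjOpR_glueGraph_glueVec heig hα, ?_⟩
  have hΨK : finrank ℝ (K.map (glueVec W ψ)) = finrank ℝ K :=
    (Submodule.equivMapOfInjective _ (glueVec_injective hψne) K).finrank_eq.symm
  obtain ⟨Φ, horth, hΦ⟩ := exists_orthonormal_mem_of_le_finrank (hΨK ▸ hK)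
  refine ⟨Φ, horth, fun a => ?_, fun a j => ?_⟩ <;> obtain ⟨α, hα, hΦa⟩ := hΦ a <;> rw [← hΦa]
  · exact adjOpR_glueGraph_glueVec heig (mem_ker_iff_sum_eq_zero.mp hα)
  · rfl
end

section
/- Let p and q be distinct prime numbers. Then {2 cos(π j /(2p)) : 1 ≤ j ≤ 2p−1} ∩ {2 cos(π k /(2q)) : 1 ≤ k ≤ 2q−1} = {0}; equivalently, the spectra of the adjacency matrices of the path graphs on 2p−1 and 2q−1 vertices intersect exactly in {0}. -/
/-! Cosine is injective on `[0, π]`, so a common value `2 cos (π j / 2p) = 2 cos (π k / 2q)`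
forces `j q = k p`. As `p` and `q` are coprime, `p ∣ j`, and `0 < j < 2p` leaves only `j = p`,
where the value is `2 cos (π / 2) = 0`. -/

open Real

lemma pi_mul_div_mem_Icc {j m : ℕ} (hjm : j ≤ m) : π * j / m ∈ Set.Icc 0 π := by
  refine ⟨by positivity, ?_⟩
  rw [mul_div_assoc]
  exact mul_le_of_le_one_right pi_pos.le (div_le_one_of_le₀ (by exact_mod_cast hjm) m.cast_nonneg)

lemma mul_eq_mul_of_cos_pi_mul_div_eq {j k m n : ℕ} (hm : 0 < m) (hn : 0 < n) (hj : j ≤ m)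
    (hk : k ≤ n) (h : cos (π * j / m) = cos (π * k / n)) : j * n = k * m := by
  have hangle := injOn_cos (pi_mul_div_mem_Icc hj) (pi_mul_div_mem_Icc hk) h
  rw [div_eq_div_iff (by positivity) (by positivity), mul_assoc, mul_assoc] at hangle
  exact_mod_cast mul_left_cancel₀ pi_ne_zero hangle

lemma eq_of_mul_eq_mul_of_coprime {p q j k : ℕ} (hpq : p.Coprime q) (h : j * q = k * p)
    (hj0 : 0 < j) (hj : j < 2 * p) : j = p := by
  obtain ⟨c, rfl⟩ : p ∣ j := hpq.dvd_of_dvd_mul_right ⟨k, by rw [h, mul_comm]⟩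
  have hc2 : c < 2 := Nat.lt_of_mul_lt_mul_left (a := p) (by linarith)
  have hc0 : c ≠ 0 := by rintro rfl; simp at hj0
  obtain rfl : c = 1 := by omega
  exact mul_one p

lemma two_mul_cos_pi_mul_self_div_two_mul_self {p : ℕ} (hp : 0 < p) :
    2 * cos (π * p / (2 * p)) = 0 := by
  rw [show π * p / (2 * p) = π / 2 by field_simp, cos_pi_div_two, mul_zero]

/-- For distinct primes `p` and `q`,
`{2 cos(π j/(2p)) : 1 ≤ j ≤ 2p-1} ∩ {2 cos(π k/(2q)) : 1 ≤ k ≤ 2q-1} = {0}`;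
equivalently, the spectra of the adjacency matrices of the path graphs on `2p-1` and
`2q-1` vertices intersect exactly in `{0}`. -/
theorem path_spectra_intersection_primes (p q : ℕ) (hp : p.Prime) (hq : q.Prime)
    (hpq : p ≠ q) :
    {x : ℝ | ∃ j : ℕ, 1 ≤ j ∧ j ≤ 2 * p - 1 ∧
        x = 2 * Real.cos (Real.pi * j / (2 * p))} ∩
      {x : ℝ | ∃ k : ℕ, 1 ≤ k ∧ k ≤ 2 * q - 1 ∧
        x = 2 * Real.cos (Real.pi * k / (2 * q))} = {0} := by
  have hp0 := hp.pos
  have hq0 := hq.pos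
  ext x
  simp only [Set.mem_inter_iff, Set.mem_ofPred_eq, Set.mem_singleton_iff]
  constructor
  · rintro ⟨⟨j, hj1, hj2, rfl⟩, ⟨k, -, hk2, hjk⟩⟩
    have hcos : cos (π * j / (2 * p : ℕ)) = cos (π * k / (2 * q : ℕ)) := by
      push_cast
      linarith
    have hjq : j * (2 * q) = k * (2 * p) :=
      mul_eq_mul_of_cos_pi_mul_div_eq (by omega) (by omega) (by omega) (by omega) hcos
    have hjp : j = p := eq_of_mul_eq_mul_of_coprime (k := k)
      ((Nat.coprime_primes hp hq).mpr hpq) (by linarith) hj1 (by omega)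
    rw [hjp, two_mul_cos_pi_mul_self_div_two_mul_self hp0]
  · rintro rfl
    exact ⟨⟨p, hp0, by omega, (two_mul_cos_pi_mul_self_div_two_mul_self hp0).symm⟩,
      ⟨q, hq0, by omega, (two_mul_cos_pi_mul_self_div_two_mul_self hq0).symm⟩⟩
end
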